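/- The simple graph whose vertices are the 6-cycles of the Heawood graph H, with two such vertices adjacent if and only if the corresponding 6-cycles have disjoint vertex sets, is isomorphic to the Coxeter graph Γ. -/

import Mathlib

/-- Vertex set of the Heawood graph: points `(0,x)` and lines `(1,y)` of the
Fano plane on `ZMod 7`, whose lines are the triples `{x, x+1, x+3}`. -/
abbrev HeawoodVertex := Fin 2 × ZMod 7

/-- Base (asymmetric) incidence relation of the Fano plane:
point `(0,x)` lies on line `(1,y)` iff `y ∈ {x, x+1, x+3}`. -/
def heawoodRel : HeawoodVertex → HeawoodVertex → Prop := fun p q =>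
  p.1 = 0 ∧ q.1 = 1 ∧ (q.2 = p.2 ∨ q.2 = p.2 + 1 ∨ q.2 = p.2 + 3)

/-- The Heawood graph: the incidence graph of the Fano plane. -/
def heawoodGraph : SimpleGraph HeawoodVertex := SimpleGraph.fromRel heawoodRel

instance : DecidableRel heawoodRel := fun p q => by unfold heawoodRel; infer_instance

instance : DecidableRel heawoodGraph.Adj := fun p q =>
  decidable_of_iff _ (SimpleGraph.fromRel_adj heawoodRel p q).symm

/-- A 6-cycle of a graph `G` is a subgraph of `G` isomorphic to the cycle graph
on 6 vertices. -/
def IsSixCycle {V : Type*} {G : SimpleGraph V} (H : G.Subgraph) : Prop :=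
  Nonempty (H.coe ≃g SimpleGraph.cycleGraph 6)

/-- Vertex set of the Coxeter graph: four concentric 7-tuples `u, v, t, z`. -/
abbrev CoxeterVertex := Fin 4 × ZMod 7

/-- Base (asymmetric) adjacency relation for the Coxeter graph:
`u_x ~ u_{x+1}`, `v_x ~ v_{x+2}`, `t_x ~ t_{x+3}`, and `z_x ~ u_x, v_x, t_x`. -/
def coxeterRel : CoxeterVertex → CoxeterVertex → Prop := fun p q =>
  (p.1 = 0 ∧ q.1 = 0 ∧ q.2 = p.2 + 1) ∨
  (p.1 = 1 ∧ q.1 = 1 ∧ q.2 = p.2 + 2) ∨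
  (p.1 = 2 ∧ q.1 = 2 ∧ q.2 = p.2 + 3) ∨
  (p.1 = 3 ∧ (q.1 = 0 ∨ q.1 = 1 ∨ q.1 = 2) ∧ q.2 = p.2)

/-- The Coxeter graph on 28 vertices. -/
def coxeterGraph : SimpleGraph CoxeterVertex := SimpleGraph.fromRel coxeterRel

/-- The graph whose vertices are the 6-cycles of the Heawood graph, two being
adjacent if and only if their vertex sets are disjoint. -/
def heawoodSixCycleGraph : SimpleGraph {C : heawoodGraph.Subgraph // IsSixCycle C} :=
  SimpleGraph.fromRel (fun C D => Disjoint C.1.verts D.1.verts)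

/-! A 6-cycle of the Heawood graph alternates between three points and three lines of the Fano
plane, each line joining two consecutive points: the 6-cycles are the 28 triangles of the plane.
The translations `x ↦ x + t` of `ZMod 7` act freely on them with four orbits, and labelling the
translates of four base triangles by `u_x, v_x, t_x, z_x` turns disjointness into Coxeter
adjacency. Up to translation, every 6-cycle starts at `(0, 0)` or `(1, 0)`, so matching it
against the labelled triangles, like checking the adjacencies, is a finite computation. -/

namespace SimpleGraph

variable {V W : Type*} {G : SimpleGraph V} {n : ℕ}

theorem cycleGraph_adj_add_one (i : Fin (n + 2)) : (cycleGraph (n + 2)).Adj i (i + 1) :=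
  Or.inr (add_sub_cancel_left i 1)

def cycleEdges [DecidableEq V] [NeZero n] (w : Fin n → V) : Finset (Sym2 V) :=
  Finset.univ.image fun i => s(w i, w (i + 1))

theorem cycleEdges_comp [DecidableEq V] [DecidableEq W] [NeZero n] (f : V → W) (w : Fin n → V) :
    cycleEdges (f ∘ w) = (cycleEdges w).image (Sym2.map f) := by
  simp [cycleEdges, Finset.image_image, Function.comp_def]

namespace Copy

def ofClosedWalk (w : Fin (n + 2) → V) (hw : ∀ i, G.Adj (w i) (w (i + 1)))
    (hinj : Function.Injective w) : Copy (cycleGraph (n + 2)) G :=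
  Hom.toCopy ⟨w, fun {i j} h => by
    rcases h with h | h
    · rw [sub_eq_iff_eq_add'] at h
      exact h ▸ (hw j).symm
    · rw [sub_eq_iff_eq_add'] at h
      exact h ▸ hw i⟩ hinj

theorem adj_apply_add_one (c : Copy (cycleGraph (n + 2)) G) (i : Fin (n + 2)) :
    G.Adj (c i) (c (i + 1)) :=
  c.toHom.map_adj (cycleGraph_adj_add_one i)

variable [DecidableEq V]

theorem toSubgraph_adj_cycleGraph (c : Copy (cycleGraph (n + 2)) G) {x y : V} :
    c.toSubgraph.Adj x y ↔ s(x, y) ∈ cycleEdges c := by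
  simp only [Subgraph.map_adj, Subgraph.top_adj, Relation.Map, cycleEdges, Finset.mem_image,
    Finset.mem_univ, true_and, Sym2.eq_iff, coe_toHom]
  constructor
  · rintro ⟨i, j, h | h, rfl, rfl⟩
    · rw [sub_eq_iff_eq_add'] at h
      exact ⟨j, Or.inr ⟨rfl, h ▸ rfl⟩⟩
    · rw [sub_eq_iff_eq_add'] at h
      exact ⟨i, Or.inl ⟨rfl, h ▸ rfl⟩⟩
  · rintro ⟨i, ⟨rfl, rfl⟩ | ⟨rfl, rfl⟩⟩
    · exact ⟨i, i + 1, cycleGraph_adj_add_one i, rfl, rfl⟩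
    · exact ⟨i + 1, i, (cycleGraph_adj_add_one i).symm, rfl, rfl⟩

theorem mem_toSubgraph_verts_cycleGraph (c : Copy (cycleGraph (n + 2)) G) {x : V} :
    x ∈ c.toSubgraph.verts ↔ ∃ e ∈ cycleEdges c, x ∈ e := by
  simp only [Subgraph.map_verts, Subgraph.verts_top, Set.image_univ, Set.mem_range, cycleEdges,
    Finset.mem_image, Finset.mem_univ, true_and, coe_toHom]
  constructor
  · rintro ⟨i, rfl⟩
    exact ⟨_, ⟨i, rfl⟩, Sym2.mem_mk_left _ _⟩
  · rintro ⟨_, ⟨i, rfl⟩, hx⟩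
    rcases Sym2.mem_iff.mp hx with rfl | rfl
    exacts [⟨i, rfl⟩, ⟨i + 1, rfl⟩]

theorem toSubgraph_eq_of_cycleEdges_eq {c c' : Copy (cycleGraph (n + 2)) G}
    (h : cycleEdges c = cycleEdges c') : c.toSubgraph = c'.toSubgraph := by
  ext x y
  · rw [mem_toSubgraph_verts_cycleGraph, mem_toSubgraph_verts_cycleGraph, h]
  · rw [toSubgraph_adj_cycleGraph, toSubgraph_adj_cycleGraph, h]

end Copy

end SimpleGraph

open SimpleGraph

theorem isSixCycle_iff_exists_copy {V : Type*} {G : SimpleGraph V} {H : G.Subgraph} :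
    IsSixCycle H ↔ ∃ c : Copy (cycleGraph 6) G, c.toSubgraph = H := by
  rw [← Set.mem_range, Copy.range_toSubgraph]
  exact ⟨fun ⟨e⟩ => ⟨e.symm⟩, fun ⟨e⟩ => ⟨e.symm⟩⟩

theorem IsSixCycle.verts_nonempty {V : Type*} {G : SimpleGraph V} {H : G.Subgraph}
    (h : IsSixCycle H) : H.verts.Nonempty :=
  let ⟨e⟩ := h
  ⟨_, (e.symm 0).2⟩

theorem heawoodSixCycleGraph_adj {C D : {C : heawoodGraph.Subgraph // IsSixCycle C}} :
    heawoodSixCycleGraph.Adj C D ↔ Disjoint C.1.verts D.1.verts := by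
  rw [heawoodSixCycleGraph, fromRel_adj, disjoint_comm (a := D.1.verts), or_self]
  refine ⟨And.right, fun h => ⟨?_, h⟩⟩
  rintro rfl
  obtain ⟨x, hx⟩ := C.2.verts_nonempty
  exact Set.disjoint_left.mp h hx hx

def heawoodTranslate (t : ZMod 7) : heawoodGraph ≃g heawoodGraph where
  toEquiv := (Equiv.refl (Fin 2)).prodCongr (Equiv.addRight t)
  map_rel_iff' := by
    rintro ⟨a, x⟩ ⟨b, y⟩
    simp [heawoodGraph, heawoodRel, add_right_comm _ t]

def hexagonSides : Fin 6 → Fin 2 := ![0, 1, 0, 1, 0, 1]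

-- The points of `hexagonWalk (k, x)` form the triangle `x + T k` of the Fano plane, where `T` is
-- `{1, 3, 5}, {1, 4, 5}, {3, 4, 5}, {0, 2, 6}`: one triangle from each translation orbit, chosen
-- so that disjointness of hexagons becomes adjacency in the Coxeter graph.
def baseHexagon : Fin 4 → Fin 6 → ZMod 7 :=
  ![![1, 1, 5, 6, 3, 4], ![1, 1, 5, 5, 4, 4], ![3, 4, 4, 5, 5, 6], ![0, 0, 6, 2, 2, 3]]

def hexagonWalk (p : CoxeterVertex) (i : Fin 6) : HeawoodVertex :=
  (hexagonSides i, baseHexagon p.1 i + p.2)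

theorem heawoodTranslate_comp_hexagonWalk (t : ZMod 7) (p : CoxeterVertex) :
    heawoodTranslate t ∘ hexagonWalk p = hexagonWalk (p.1, p.2 + t) := by
  funext i
  exact Prod.ext rfl (add_assoc _ _ _)

-- Enumerating the walk neighbour by neighbour leaves `decide` only `2 * 3 ^ 5` walks to inspect.
set_option maxRecDepth 4000 in
set_option synthInstance.maxSize 2000 in
theorem exists_hexagonWalk_of_start : ∀ s : Fin 2,
    ∀ v1 ∈ heawoodGraph.neighborFinset (s, 0), ∀ v2 ∈ heawoodGraph.neighborFinset v1,
    ∀ v3 ∈ heawoodGraph.neighborFinset v2, ∀ v4 ∈ heawoodGraph.neighborFinset v3,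
    ∀ v5 ∈ heawoodGraph.neighborFinset v4, heawoodGraph.Adj v5 (s, 0) →
    Function.Injective ![(s, 0), v1, v2, v3, v4, v5] →
    ∃ p, cycleEdges ![(s, 0), v1, v2, v3, v4, v5] = cycleEdges (hexagonWalk p) := by
  decide

theorem exists_hexagonWalk_of_translate {w : Fin 6 → HeawoodVertex} (t : ZMod 7)
    (h : ∃ p, cycleEdges (heawoodTranslate t ∘ w) = cycleEdges (hexagonWalk p)) :
    ∃ p, cycleEdges w = cycleEdges (hexagonWalk p) := by
  obtain ⟨p, hp⟩ := h
  refine ⟨(p.1, p.2 + -t), ?_⟩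
  have hw : w = heawoodTranslate (-t) ∘ heawoodTranslate t ∘ w := by
    funext i
    exact Prod.ext rfl (add_neg_cancel_right _ _).symm
  rw [← heawoodTranslate_comp_hexagonWalk, cycleEdges_comp, ← hp, ← cycleEdges_comp, ← hw]

theorem exists_hexagonWalk_of_closedWalk {w : Fin 6 → HeawoodVertex}
    (hw : ∀ i, heawoodGraph.Adj (w i) (w (i + 1))) (hinj : Function.Injective w) :
    ∃ p, cycleEdges w = cycleEdges (hexagonWalk p) := by
  apply exists_hexagonWalk_of_translate (-(w 0).2)
  set w' := heawoodTranslate (-(w 0).2) ∘ w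
  have hw' (i : Fin 6) : heawoodGraph.Adj (w' i) (w' (i + 1)) :=
    (heawoodTranslate _).map_adj_iff.mpr (hw i)
  have h0 : w' 0 = ((w 0).1, 0) := Prod.ext rfl (add_neg_cancel _)
  have hvec : ![w' 0, w' 1, w' 2, w' 3, w' 4, w' 5] = w' := by
    funext i
    fin_cases i <;> rfl
  have hnbr (i : Fin 6) : w' (i + 1) ∈ heawoodGraph.neighborFinset (w' i) :=
    (mem_neighborFinset _ _ _).2 (hw' i)
  have key := exists_hexagonWalk_of_start (w 0).1 (w' 1) (h0 ▸ hnbr 0) (w' 2) (hnbr 1)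
    (w' 3) (hnbr 2) (w' 4) (hnbr 3) (w' 5) (hnbr 4) (h0 ▸ hw' 5)
  rw [← h0, hvec] at key
  exact key ((heawoodTranslate _).injective.comp hinj)

instance : DecidableRel coxeterRel := fun p q => by unfold coxeterRel; infer_instance

instance : DecidableRel coxeterGraph.Adj :=
  inferInstanceAs (DecidableRel (fromRel coxeterRel).Adj)

theorem hexagonWalk_adj :
    ∀ p i, heawoodGraph.Adj (hexagonWalk p i) (hexagonWalk p (i + 1)) := by
  decide

theorem hexagonWalk_injective : ∀ p, Function.Injective (hexagonWalk p) := by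
  decide

def hexagon (p : CoxeterVertex) : Copy (cycleGraph 6) heawoodGraph :=
  .ofClosedWalk (hexagonWalk p) (hexagonWalk_adj p) (hexagonWalk_injective p)

def hexagonVerts (p : CoxeterVertex) : Finset HeawoodVertex :=
  Finset.univ.image (hexagonWalk p)

theorem hexagon_toSubgraph_verts (p : CoxeterVertex) :
    (hexagon p).toSubgraph.verts = hexagonVerts p := by
  simp [hexagon, hexagonVerts, Copy.ofClosedWalk]

theorem hexagonVerts_injective : Function.Injective hexagonVerts := by
  decide

theorem disjoint_hexagonVerts_iff :
    ∀ p q, Disjoint (hexagonVerts p) (hexagonVerts q) ↔ coxeterGraph.Adj p q := by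
  decide

/-- The graph of disjointness of 6-cycles of the Heawood graph is isomorphic to
the Coxeter graph. -/
theorem heawoodSixCycleGraph_iso_coxeterGraph :
    Nonempty (heawoodSixCycleGraph ≃g coxeterGraph) := by
  let Φ : CoxeterVertex → {C : heawoodGraph.Subgraph // IsSixCycle C} := fun p =>
    ⟨(hexagon p).toSubgraph, isSixCycle_iff_exists_copy.mpr ⟨_, rfl⟩⟩
  have hverts (p : CoxeterVertex) : (Φ p).1.verts = hexagonVerts p := hexagon_toSubgraph_verts p
  have hinj : Function.Injective Φ := fun p q h => hexagonVerts_injective <|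
    Finset.coe_injective <| (hverts p).symm.trans <| (congrArg (·.1.verts) h).trans (hverts q)
  have hsurj : Function.Surjective Φ := by
    rintro ⟨C, hC⟩
    obtain ⟨c, rfl⟩ := isSixCycle_iff_exists_copy.mp hC
    obtain ⟨p, hp⟩ := exists_hexagonWalk_of_closedWalk c.adj_apply_add_one c.injective
    exact ⟨p, Subtype.ext (Copy.toSubgraph_eq_of_cycleEdges_eq hp.symm)⟩
  refine ⟨(RelIso.mk (Equiv.ofBijective Φ ⟨hinj, hsurj⟩) ?_).symm⟩
  intro p q
  change heawoodSixCycleGraph.Adj (Φ p) (Φ q) ↔ _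
  rw [heawoodSixCycleGraph_adj, hverts, hverts, Finset.disjoint_coe, disjoint_hexagonVerts_iff]
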